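/- Let λ be a real number with λ ∉ {0, 2}, set μ = 2 − λ and fix ω ≠ 0. Let (x, y) be a pair of functions analytic on an open interval J ⊆ ℝ satisfying the normal-form Fuchsian system on J. Then for every integer k ≥ 1 and every t ∈ J: t(t−1)·(d²/dt²)(t^k·x(t)) = (k+λ)(k+λ−1)·t^k·x(t) − k·t^{k−1}·((λ+k−1)·x(t) + μω·y(t)), and t(t−1)·(d²/dt²)(t^k·y(t)) = (k+μ)(k+μ−1)·t^k·y(t) − k·t^{k−1}·((λ/ω)·x(t) + (μ+k−1)·y(t)). -/

import Mathlib

noncomputable section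

/-- The real normal-form Fuchsian system with parameters `lam` (λ), `2 - lam` (μ) and
`om` (ω), at the point `t`. -/
def RealFuchsSys (lam om : ℝ) (x y : ℝ → ℝ) (t : ℝ) : Prop :=
  x t = ((2 * t - 1) / (2 * lam)) * deriv x t + (om / (2 * lam)) * deriv y t ∧
  y t = (1 / (2 * (2 - lam) * om)) * deriv x t
      + ((2 * t - 1) / (2 * (2 - lam))) * deriv y t

open Filter Topology

lemma vanish_of_mul_vanish (J : Set ℝ) (hJ : IsOpen J) (F : ℝ → ℝ)
    (hF : ∀ t ∈ J, ContinuousAt F t)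
    (h0 : ∀ t ∈ J, t * (t - 1) * F t = 0) :
    ∀ t ∈ J, F t = 0 := by
  intro t ht
  set S : Set ℝ := {s : ℝ | s = 0 ∨ s = 1} with hS
  have hSc : S.Countable := by
    have : S = {0, 1} := by ext s; simp [hS, Set.mem_insert_iff]
    rw [this]; exact (Set.countable_singleton _).insert _
  have hdense : Dense Sᶜ := hSc.dense_compl ℝ
  have hne : (𝓝[Sᶜ] t).NeBot := mem_closure_iff_nhdsWithin_neBot.mp (hdense t)
  have h1 : Tendsto F (𝓝[Sᶜ] t) (𝓝 (F t)) := (hF t ht).continuousWithinAt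
  have h2 : Tendsto F (𝓝[Sᶜ] t) (𝓝 0) := by
    have hJev : ∀ᶠ s in 𝓝[Sᶜ] t, s ∈ J :=
      mem_nhdsWithin_of_mem_nhds (hJ.mem_nhds ht)
    have hSev : ∀ᶠ s in 𝓝[Sᶜ] t, s ∈ Sᶜ := self_mem_nhdsWithin
    have hev : ∀ᶠ s in 𝓝[Sᶜ] t, F s = 0 := by
      filter_upwards [hJev, hSev] with s hsJ hsS
      have hs0 : s ≠ 0 := fun h => hsS (Or.inl h)
      have hs1 : s ≠ 1 := fun h => hsS (Or.inr h)
      have hmul : s * (s - 1) ≠ 0 := by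
        apply mul_ne_zero hs0; intro h; exact hs1 (by linarith)
      exact (mul_eq_zero.mp (h0 s hsJ)).resolve_left hmul
    exact Tendsto.congr' (by filter_upwards [hev] with s hs using hs.symm) tendsto_const_nhds
  exact tendsto_nhds_unique h1 h2

/-- Scalar hypergeometric ODE from the first-order system. -/
lemma aux_ode (a c d : ℝ) (hcd : c * d = a * (2 - a)) (J : Set ℝ) (hJ : IsOpen J)
    (x y : ℝ → ℝ) (hx : AnalyticOnNhd ℝ x J) (hy : AnalyticOnNhd ℝ y J)
    (hA : ∀ t ∈ J, 2 * t * (t - 1) * deriv x t = a * (2 * t - 1) * x t - c * y t)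
    (hB : ∀ t ∈ J, 2 * t * (t - 1) * deriv y t = (2 - a) * (2 * t - 1) * y t - d * x t) :
    ∀ t ∈ J, t * (t - 1) * deriv (deriv x) t = a * (a - 1) * x t := by
  have hx' : AnalyticOnNhd ℝ (deriv x) J := hx.deriv
  have key : ∀ t ∈ J, t * (t - 1) *
      (t * (t - 1) * deriv (deriv x) t - a * (a - 1) * x t) = 0 := by
    intro t ht
    have hXd : HasDerivAt x (deriv x t) t := (hx t ht).differentiableAt.hasDerivAt
    have hYd : HasDerivAt y (deriv y t) t := (hy t ht).differentiableAt.hasDerivAt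
    have hX'd : HasDerivAt (deriv x) (deriv (deriv x) t) t :=
      (hx' t ht).differentiableAt.hasDerivAt
    have hpoly : HasDerivAt (fun s : ℝ => 2 * s * (s - 1)) (2 * (2 * t - 1)) t := by
      have h := (((hasDerivAt_id t).const_mul 2).mul ((hasDerivAt_id t).sub_const 1))
      refine h.congr_deriv ?_
      simp only [id_eq]; ring
    have hf : HasDerivAt (fun s : ℝ => 2 * s * (s - 1) * deriv x s)
        (2 * (2 * t - 1) * deriv x t + 2 * t * (t - 1) * deriv (deriv x) t) t :=
      hpoly.mul hX'd
    have hp2 : HasDerivAt (fun s : ℝ => a * (2 * s - 1)) (a * 2) t := by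
      have h := (((hasDerivAt_id t).const_mul 2).sub_const 1).const_mul a
      refine h.congr_deriv ?_
      ring
    have hg : HasDerivAt (fun s : ℝ => a * (2 * s - 1) * x s - c * y s)
        ((a * 2 * x t + a * (2 * t - 1) * deriv x t) - c * deriv y t) t :=
      (hp2.mul hXd).sub (hYd.const_mul c)
    have hEq : deriv (fun s : ℝ => 2 * s * (s - 1) * deriv x s) t
        = deriv (fun s : ℝ => a * (2 * s - 1) * x s - c * y s) t := by
      apply Filter.EventuallyEq.deriv_eq
      filter_upwards [hJ.mem_nhds ht] with s hs
      exact hA s hs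
    rw [hf.deriv, hg.deriv] at hEq
    linear_combination (t * (t - 1) / 2) * hEq + ((a - 2) * (2 * t - 1) / 4) * (hA t ht)
      + (-c / 4) * (hB t ht) + (x t / 4) * hcd
  intro t ht
  have h := vanish_of_mul_vanish J hJ
    (fun s => s * (s - 1) * deriv (deriv x) s - a * (a - 1) * x s)
    (fun s hs => by
      have h1 : ContinuousAt (deriv (deriv x)) s := (hx'.deriv s hs).continuousAt
      have h2 : ContinuousAt x s := (hx s hs).continuousAt
      fun_prop)
    key t ht
  linarith [h]

/-- General monomial identity from the first-order relation and the scalar ODE. -/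
lemma mono_step (a c : ℝ) (J : Set ℝ) (hJ : IsOpen J)
    (x y : ℝ → ℝ) (hx : AnalyticOnNhd ℝ x J)
    (hA : ∀ t ∈ J, 2 * t * (t - 1) * deriv x t = a * (2 * t - 1) * x t - c * y t)
    (hODE : ∀ t ∈ J, t * (t - 1) * deriv (deriv x) t = a * (a - 1) * x t) :
    ∀ k : ℕ, 1 ≤ k → ∀ t ∈ J,
      t * (t - 1) * deriv (deriv (fun s : ℝ => s ^ k * x s)) t
        = ((k : ℝ) + a) * ((k : ℝ) + a - 1) * t ^ k * x t
          - (k : ℝ) * t ^ (k - 1) * ((a + (k : ℝ) - 1) * x t + c * y t) := by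
  have hx' : AnalyticOnNhd ℝ (deriv x) J := hx.deriv
  intro k hk t ht
  obtain ⟨m, rfl⟩ : ∃ m, k = m + 1 := ⟨k - 1, by omega⟩
  have hXd : HasDerivAt x (deriv x t) t := (hx t ht).differentiableAt.hasDerivAt
  have hX'd : HasDerivAt (deriv x) (deriv (deriv x) t) t :=
    (hx' t ht).differentiableAt.hasDerivAt
  have hu' : ∀ s ∈ J, deriv (fun r : ℝ => r ^ (m + 1) * x r) s
      = ((m : ℝ) + 1) * (s ^ m * x s) + s ^ (m + 1) * deriv x s := by
    intro s hs
    have h := (hasDerivAt_pow (m + 1) s).mul ((hx s hs).differentiableAt.hasDerivAt)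
    have h2 : HasDerivAt (fun r : ℝ => r ^ (m + 1) * x r)
        (((m : ℝ) + 1) * (s ^ m * x s) + s ^ (m + 1) * deriv x s) s := by
      refine h.congr_deriv ?_
      push_cast [Nat.add_sub_cancel]
      ring
    exact h2.deriv
  have hEq : deriv (deriv (fun s : ℝ => s ^ (m + 1) * x s)) t
      = deriv (fun s : ℝ => ((m : ℝ) + 1) * (s ^ m * x s) + s ^ (m + 1) * deriv x s) t := by
    apply Filter.EventuallyEq.deriv_eq
    filter_upwards [hJ.mem_nhds ht] with s hs
    exact hu' s hs
  have hD0 := (HasDerivAt.const_mul ((m : ℝ) + 1) ((hasDerivAt_pow m t).mul hXd)).add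
      ((hasDerivAt_pow (m + 1) t).mul hX'd)
  have hD : deriv (deriv (fun s : ℝ => s ^ (m + 1) * x s)) t
      = ((m : ℝ) + 1) * (((m : ℕ) : ℝ) * t ^ (m - 1) * x t + t ^ m * deriv x t)
        + (((m + 1 : ℕ) : ℝ) * t ^ (m + 1 - 1) * deriv x t
            + t ^ (m + 1) * deriv (deriv x) t) := hEq.trans hD0.deriv
  rw [hD]
  have hmt : ((m : ℕ) : ℝ) * t ^ (m - 1) * t = ((m : ℕ) : ℝ) * t ^ m := by
    cases m with
    | zero => simp
    | succ n =>
      simp only [Nat.add_sub_cancel]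
      rw [pow_succ]
      ring
  simp only [Nat.add_sub_cancel]
  push_cast
  linear_combination (t ^ (m + 1)) * (hODE t ht) + (((m : ℝ) + 1) * t ^ m) * (hA t ht)
    + (((m : ℝ) + 1) * (t - 1) * (x t)) * hmt

theorem monomial_multiple_identities (lam om : ℝ)
    (hlam0 : lam ≠ 0) (hlam2 : lam ≠ 2) (hom : om ≠ 0)
    (J : Set ℝ) (hJopen : IsOpen J) (hJconn : J.OrdConnected)
    (x y : ℝ → ℝ)
    (hx : AnalyticOnNhd ℝ x J) (hy : AnalyticOnNhd ℝ y J)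
    (hsys : ∀ t ∈ J, RealFuchsSys lam om x y t) :
    ∀ k : ℕ, 1 ≤ k → ∀ t ∈ J,
      (t * (t - 1) * deriv (deriv (fun s : ℝ => s ^ k * x s)) t
        = ((k : ℝ) + lam) * ((k : ℝ) + lam - 1) * t ^ k * x t
          - (k : ℝ) * t ^ (k - 1) * ((lam + (k : ℝ) - 1) * x t + (2 - lam) * om * y t)) ∧
      (t * (t - 1) * deriv (deriv (fun s : ℝ => s ^ k * y s)) t
        = ((k : ℝ) + (2 - lam)) * ((k : ℝ) + (2 - lam) - 1) * t ^ k * y t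
          - (k : ℝ) * t ^ (k - 1) * ((lam / om) * x t + ((2 - lam) + (k : ℝ) - 1) * y t)) := by
  have hmu : (2 : ℝ) - lam ≠ 0 := sub_ne_zero.mpr (Ne.symm hlam2)
  -- cleared forms of the system
  have e1 : ∀ t ∈ J, 2 * lam * x t = (2 * t - 1) * deriv x t + om * deriv y t := by
    intro t ht
    have h := (hsys t ht).1
    field_simp at h
    linear_combination h
  have e2 : ∀ t ∈ J, 2 * (2 - lam) * om * y t = deriv x t + (2 * t - 1) * om * deriv y t := by
    intro t ht
    have h := (hsys t ht).2
    field_simp at h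
    have h2 : (2 * (2 - lam)) * (2 * (2 - lam) * om * y t)
        = (2 * (2 - lam)) * (deriv x t + (2 * t - 1) * om * deriv y t) := by
      linear_combination (2 * (2 - lam)) * h
    exact mul_left_cancel₀ (mul_ne_zero two_ne_zero hmu) h2
  -- the two first-order relations
  have relAx : ∀ t ∈ J, 2 * t * (t - 1) * deriv x t
      = lam * (2 * t - 1) * x t - (2 - lam) * om * y t := by
    intro t ht
    linear_combination (-(2 * t - 1) / 2) * (e1 t ht) + (1 / 2) * (e2 t ht)
  have relAy : ∀ t ∈ J, 2 * t * (t - 1) * deriv y t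
      = (2 - lam) * (2 * t - 1) * y t - lam / om * x t := by
    intro t ht
    have hclean : 2 * t * (t - 1) * om * deriv y t
        = (2 - lam) * om * (2 * t - 1) * y t - lam * x t := by
      linear_combination (1 / 2) * (e1 t ht) + (-(2 * t - 1) / 2) * (e2 t ht)
    field_simp
    linear_combination hclean
  have relBy : ∀ t ∈ J, 2 * t * (t - 1) * deriv x t
      = (2 - (2 - lam)) * (2 * t - 1) * x t - (2 - lam) * om * y t := by
    intro t ht
    linear_combination relAx t ht
  have hcdx : (2 - lam) * om * (lam / om) = lam * (2 - lam) := by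
    field_simp
  have hcdy : lam / om * ((2 - lam) * om) = (2 - lam) * (2 - (2 - lam)) := by
    field_simp; ring
  have hodex := aux_ode lam ((2 - lam) * om) (lam / om) hcdx J hJopen x y hx hy relAx relAy
  have hodey := aux_ode (2 - lam) (lam / om) ((2 - lam) * om) hcdy J hJopen y x hy hx relAy relBy
  intro k hk t ht
  constructor
  · exact mono_step lam ((2 - lam) * om) J hJopen x y hx relAx hodex k hk t ht
  · linear_combination mono_step (2 - lam) (lam / om) J hJopen y x hy relAy hodey k hk t ht
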